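/- Characterization of passage through q (Lemma on prefixes): Let θ be a linear order on ℤ, p ∈ ℤ^2, q = p + (s_1, s_2) with s_1, s_2 ≥ 1, and n > s_1 + s_2. Let a be the s_1-th smallest and b the (s_1+1)-th smallest element of θ restricted to [p_1+p_2, p_1+p_2+s_1+s_2-1], and let i_a, i_b be the ranks (positions) of a and b respectively in θ restricted to [p_1+p_2, p_1+p_2+n-1]. Then for any r ∈ ℤ^2 with r_1 + r_2 = p_1 + p_2 + n, the total-order-construction path R(p,r) passes through q if and only if r_1 ≥ q_1, r_2 ≥ q_2, and i_a ≤ r_1 - p_1 ≤ i_b - 1. -/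
import Mathlib


open scoped Classical

/-- One step of the total order construction in `ℤ²` for the positive quadrant:
from the point `m`, step in the `x₁` direction if `m.1 + m.2` is among the
`q.1 - p.1` smallest elements (w.r.t. `r`) of the interval
`[p.1 + p.2, q.1 + q.2 - 1]`, and otherwise step in the `x₂` direction. -/
noncomputable def step2 (r : ℤ → ℤ → Prop) (p q m : ℤ × ℤ) : ℤ × ℤ :=
  if ((Finset.Icc (p.1 + p.2) (q.1 + q.2 - 1)).filter
      (fun y => r y (m.1 + m.2))).card < (q.1 - p.1).toNat
  then (m.1 + 1, m.2) else (m.1, m.2 + 1)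

/-- The point visited after `j` steps of the total order construction path
from `p` towards `q` generated by the order `r`. -/
noncomputable def path2 (r : ℤ → ℤ → Prop) (p q : ℤ × ℤ) : ℕ → ℤ × ℤ
  | 0 => p
  | j + 1 => step2 r p q (path2 r p q j)

section aux
variable {r : ℤ → ℤ → Prop}

lemma cnt_lt_of_rel (h : IsStrictTotalOrder ℤ r) (F : Finset ℤ) {t u : ℤ}
    (ht : t ∈ F) (htu : r t u) :
    (F.filter (fun y => r y t)).card < (F.filter (fun y => r y u)).card := by
  haveI := h
  refine Finset.card_lt_card ⟨fun y hy => ?_, fun hsub => ?_⟩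
  · simp only [Finset.mem_filter] at hy ⊢
    exact ⟨hy.1, _root_.trans_of r hy.2 htu⟩
  · have := hsub (Finset.mem_filter.mpr ⟨ht, htu⟩)
    exact irrefl_of r t (Finset.mem_filter.mp this).2

lemma rel_of_cnt_lt (h : IsStrictTotalOrder ℤ r) (F : Finset ℤ) {t u : ℤ}
    (ht : t ∈ F) (hu : u ∈ F)
    (hc : (F.filter (fun y => r y t)).card < (F.filter (fun y => r y u)).card) :
    r t u := by
  haveI := h
  rcases trichotomous_of r t u with h1 | rfl | h1
  · exact h1
  · omega
  · exact absurd (cnt_lt_of_rel h F hu h1) (by omega)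

lemma path2_sum (r : ℤ → ℤ → Prop) (p s : ℤ × ℤ) (j : ℕ) :
    (path2 r p s j).1 + (path2 r p s j).2 = p.1 + p.2 + j := by
  induction j with
  | zero => simp [path2]
  | succ j ih =>
    rw [path2, step2]
    split <;> simp only [] <;> push_cast <;> push_cast at ih <;> omega

lemma path2_fst (r : ℤ → ℤ → Prop) (p s : ℤ × ℤ) (j : ℕ) :
    (path2 r p s j).1 = p.1 + ((Finset.Icc (p.1 + p.2) (p.1 + p.2 + (j : ℤ) - 1)).filter
      (fun t => ((Finset.Icc (p.1 + p.2) (s.1 + s.2 - 1)).filter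
        (fun y => r y t)).card < (s.1 - p.1).toNat)).card := by
  induction j with
  | zero =>
    have he : Finset.Icc (p.1 + p.2) (p.1 + p.2 + ((0:ℕ) : ℤ) - 1) = ∅ := by
      apply Finset.Icc_eq_empty; omega
    simp [path2, he]
  | succ j ih =>
    have hsum := path2_sum r p s j
    have hins : Finset.Icc (p.1 + p.2) (p.1 + p.2 + ((j+1 : ℕ) : ℤ) - 1)
        = insert (p.1 + p.2 + (j : ℤ)) (Finset.Icc (p.1 + p.2) (p.1 + p.2 + (j : ℤ) - 1)) := by
      ext x; simp only [Finset.mem_Icc, Finset.mem_insert]; push_cast; omega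
    rw [path2, step2, hsum, hins, Finset.filter_insert]
    have hnot : (p.1 + p.2 + (j : ℤ)) ∉ (Finset.Icc (p.1 + p.2) (p.1 + p.2 + (j : ℤ) - 1)).filter
        (fun t => ((Finset.Icc (p.1 + p.2) (s.1 + s.2 - 1)).filter
          (fun y => r y t)).card < (s.1 - p.1).toNat) := by
      simp only [Finset.mem_filter, Finset.mem_Icc]
      intro hx; omega
    split
    · rw [Finset.card_insert_of_notMem hnot]
      simp only []
      push_cast
      omega
    · simp only []
      omega

end aux

theorem stmt_15 (r : ℤ → ℤ → Prop) (h : IsStrictTotalOrder ℤ r)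
    (p : ℤ × ℤ) (s1 s2 : ℕ) (hs1 : 1 ≤ s1) (hs2 : 1 ≤ s2)
    (n : ℕ) (hn : s1 + s2 < n)
    (q : ℤ × ℤ) (hq : q = (p.1 + (s1 : ℤ), p.2 + (s2 : ℤ)))
    (a b : ℤ)
    -- `a` is the `s1`-th smallest element of `r` restricted to the "left" interval
    (haI : a ∈ Finset.Icc (p.1 + p.2) (p.1 + p.2 + (s1 : ℤ) + (s2 : ℤ) - 1))
    (haRank : ((Finset.Icc (p.1 + p.2) (p.1 + p.2 + (s1 : ℤ) + (s2 : ℤ) - 1)).filter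
        (fun y => r y a)).card = s1 - 1)
    -- `b` is the `(s1+1)`-th smallest element of `r` restricted to the "left" interval
    (hbI : b ∈ Finset.Icc (p.1 + p.2) (p.1 + p.2 + (s1 : ℤ) + (s2 : ℤ) - 1))
    (hbRank : ((Finset.Icc (p.1 + p.2) (p.1 + p.2 + (s1 : ℤ) + (s2 : ℤ) - 1)).filter
        (fun y => r y b)).card = s1)
    -- ranks of `a` and `b` in `r` restricted to the "complete" interval
    (ia ib : ℕ)
    (hia : ia = ((Finset.Icc (p.1 + p.2) (p.1 + p.2 + (n : ℤ) - 1)).filter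
        (fun y => r y a)).card + 1)
    (hib : ib = ((Finset.Icc (p.1 + p.2) (p.1 + p.2 + (n : ℤ) - 1)).filter
        (fun y => r y b)).card + 1)
    (s : ℤ × ℤ) (hs : s.1 + s.2 = p.1 + p.2 + (n : ℤ)) :
    (∃ j ≤ n, path2 r p s j = q) ↔
      (q.1 ≤ s.1 ∧ q.2 ≤ s.2 ∧ (ia : ℤ) ≤ s.1 - p.1 ∧ s.1 - p.1 ≤ (ib : ℤ) - 1) := by
  haveI := h
  set I : Finset ℤ := Finset.Icc (p.1 + p.2) (p.1 + p.2 + (n : ℤ) - 1) with hI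
  set J : Finset ℤ := Finset.Icc (p.1 + p.2) (p.1 + p.2 + (s1 : ℤ) + (s2 : ℤ) - 1) with hJ
  set k : ℕ := (s.1 - p.1).toNat with hk
  -- basic inclusions
  have hJI : J ⊆ I := by
    intro x hx
    rw [hJ, Finset.mem_Icc] at hx
    rw [hI, Finset.mem_Icc]
    omega
  have haI' : a ∈ I := hJI haI
  have hbI' : b ∈ I := hJI hbI
  have hca1 : s1 - 1 ≤ (I.filter (fun y => r y a)).card := by
    rw [← haRank]
    exact Finset.card_le_card (Finset.monotone_filter_left _ hJI)
  have hcb1 : s1 ≤ (I.filter (fun y => r y b)).card := by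
    rw [← hbRank]
    exact Finset.card_le_card (Finset.monotone_filter_left _ hJI)
  -- c b ≤ n - s2
  have hJcard : J.card = s1 + s2 := by
    rw [hJ, Int.card_Icc]; omega
  have hIcard : I.card = n := by
    rw [hI, Int.card_Icc]; omega
  have hcbn : (I.filter (fun y => r y b)).card ≤ n - s2 := by
    have hsplit := Finset.card_filter_add_card_filter_not (s := J) (p := fun y => r y b)
    rw [hJcard, hbRank] at hsplit
    have hdisj : Disjoint (I.filter (fun y => r y b)) (J.filter (fun y => ¬ r y b)) := by
      rw [Finset.disjoint_left]
      intro x hx hx'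
      simp only [Finset.mem_filter] at hx hx'
      exact hx'.2 hx.2
    have hsub : (I.filter (fun y => r y b)) ∪ (J.filter (fun y => ¬ r y b)) ⊆ I := by
      apply Finset.union_subset (Finset.filter_subset _ _)
      exact (Finset.filter_subset _ _).trans hJI
    have := Finset.card_le_card hsub
    rw [Finset.card_union_of_disjoint hdisj, hIcard] at this
    omega
  -- Step C: the path characterization
  have hfst := path2_fst r p s (s1 + s2)
  have hs1' : s.1 + s.2 - 1 = p.1 + p.2 + (n : ℤ) - 1 := by omega
  rw [hs1', ← hI, ← hk] at hfst
  have hJ' : Finset.Icc (p.1 + p.2) (p.1 + p.2 + ((s1 + s2 : ℕ) : ℤ) - 1) = J := by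
    rw [hJ]; congr 1; push_cast; ring
  rw [hJ'] at hfst
  -- hfst : (path2 r p s (s1+s2)).1 = p.1 + (J.filter (fun t => (I.filter (r y ·)).card < k)).card
  have hsum2 := path2_sum r p s (s1 + s2)
  have hkey : (path2 r p s (s1 + s2) = q) ↔
      ((J.filter (fun t => (I.filter (fun y => r y t)).card < k)).card = s1) := by
    rw [Prod.ext_iff, hq]
    constructor
    · rintro ⟨h1, _⟩
      rw [hfst] at h1; simp only at h1; omega
    · intro hcard
      rw [hcard] at hfst
      constructor
      · simp only; omega
      · simp only; push_cast at hsum2 ⊢; omega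
  have hL : (∃ j ≤ n, path2 r p s j = q) ↔
      ((J.filter (fun t => (I.filter (fun y => r y t)).card < k)).card = s1) := by
    constructor
    · rintro ⟨j, hj, hpe⟩
      have h1 := path2_sum r p s j
      rw [hpe, hq] at h1
      simp only at h1
      have hj' : j = s1 + s2 := by push_cast at h1; omega
      rw [hj'] at hpe
      exact hkey.mp hpe
    · intro hcard
      exact ⟨s1 + s2, by omega, hkey.mpr hcard⟩
  -- Step D: combinatorial characterization
  have hM : ((J.filter (fun t => (I.filter (fun y => r y t)).card < k)).card = s1) ↔
      ((I.filter (fun y => r y a)).card < k ∧ k ≤ (I.filter (fun y => r y b)).card) := by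
    constructor
    · intro hcard
      constructor
      · by_contra hle
        push_neg at hle
        have hsub : J.filter (fun t => (I.filter (fun y => r y t)).card < k)
            ⊆ J.filter (fun y => r y a) := by
          intro t ht
          simp only [Finset.mem_filter] at ht ⊢
          exact ⟨ht.1, rel_of_cnt_lt h I (hJI ht.1) haI' (by omega)⟩
        have := Finset.card_le_card hsub
        rw [haRank, hcard] at this
        omega
      · by_contra hle
        push_neg at hle
        have hsub : insert b (J.filter (fun y => r y b))
            ⊆ J.filter (fun t => (I.filter (fun y => r y t)).card < k) := by
          intro t ht
          rcases Finset.mem_insert.mp ht with rfl | ht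
          · exact Finset.mem_filter.mpr ⟨hbI, hle⟩
          · simp only [Finset.mem_filter] at ht ⊢
            exact ⟨ht.1, lt_trans (cnt_lt_of_rel h I (hJI ht.1) ht.2) hle⟩
        have hbn : b ∉ J.filter (fun y => r y b) := by
          simp only [Finset.mem_filter, not_and]
          intro _
          exact irrefl_of r b
        have := Finset.card_le_card hsub
        rw [Finset.card_insert_of_notMem hbn, hbRank, hcard] at this
        omega
    · rintro ⟨h1, h2⟩
      have heq : J.filter (fun t => (I.filter (fun y => r y t)).card < k)
          = J.filter (fun y => r y b) := by
        ext t
        simp only [Finset.mem_filter, and_congr_right_iff]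
        intro htJ
        constructor
        · intro hck
          rcases trichotomous_of r t b with h3 | rfl | h3
          · exact h3
          · omega
          · exact absurd (lt_trans (cnt_lt_of_rel h I hbI' h3) hck) (by omega)
        · intro hrb
          have hcJt : (J.filter (fun y => r y t)).card < s1 := by
            rw [← hbRank]
            exact cnt_lt_of_rel h J htJ hrb
          rcases trichotomous_of r a t with h3 | rfl | h3
          · have := cnt_lt_of_rel h J haI h3
            rw [haRank] at this
            omega
          · exact h1
          · exact lt_trans (cnt_lt_of_rel h I (hJI htJ) h3) h1
      rw [heq, hbRank]
  rw [hL, hM, hq, hia, hib]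
  simp only
  clear hL hM hkey hfst hsum2 hJcard hIcard hJI haI' hbI' haI hbI haRank hbRank hq hia hib
  omega
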